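/- Assume S is a finite regular semigroup generated by the finite alphabet A. Let T^1 = KR_right(S,A)^1 and φ: T^1 → S^1 the canonical surjective homomorphism. If t, t' ∈ T^1 satisfy φ(t) ≤_J φ(t'), then t ≤_J t'. -/
import Mathlib


open scoped Classical

namespace KRHolonomy

/-- Green's quasi-order `≤_J` on a monoid: `a ≤_J b` iff `a ∈ M b M`. -/
def leJ {M : Type*} [Monoid M] (a b : M) : Prop := ∃ x y : M, a = x * b * y

/-- `a <_J b` iff `a ≤_J b` and not `b ≤_J a`. -/
def ltJ {M : Type*} [Monoid M] (a b : M) : Prop := leJ a b ∧ ¬ leJ b a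

/-- Green's quasi-order `≤_R` on a monoid: `a ≤_R b` iff `a ∈ b M`. -/
def leR {M : Type*} [Monoid M] (a b : M) : Prop := ∃ x : M, a = b * x

/-- `a <_R b` iff `a ≤_R b` and not `b ≤_R a`. -/
def ltR {M : Type*} [Monoid M] (a b : M) : Prop := leR a b ∧ ¬ leR b a

/-- Green's quasi-order `≤_L` on a monoid: `a ≤_L b` iff `a ∈ M b`. -/
def leL {M : Type*} [Monoid M] (a b : M) : Prop := ∃ x : M, a = x * b

/-- `a <_L b` iff `a ≤_L b` and not `b ≤_L a`. -/
def ltL {M : Type*} [Monoid M] (a b : M) : Prop := leL a b ∧ ¬ leL b a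

/-- The Dedekind height function: `height x` is the largest `k` such that there is a chain
`x₀ >_J x₁ >_J ⋯ >_J x_k = x`. -/
noncomputable def height {M : Type*} [Monoid M] (x : M) : ℕ :=
  sSup {k | ∃ c : ℕ → M, c k = x ∧ ∀ i < k, ltJ (c (i + 1)) (c i)}

variable {A S : Type*} [Semigroup S]

/-- The edge `(s, a, s·θ(a))` of the right Cayley graph of `(S,A)` is a transition edge:
there is no path in the right Cayley graph from `s·θ(a)` back to `s`. -/
def IsTransitionEdge (θ : FreeMonoid A →* WithOne S) (s : WithOne S) (a : A) : Prop :=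
  ¬ ∃ w : FreeMonoid A, s * θ (FreeMonoid.of a) * θ w = s

/-- The (ordered) sequence of transition edges along the path of the right Cayley graph
starting at `s` and reading the word `u`; an edge is recorded as a pair (source, label). -/
noncomputable def transEdgesFrom (θ : FreeMonoid A →* WithOne S) :
    WithOne S → List A → List (WithOne S × A)
  | _, [] => []
  | s, a :: w =>
      (if IsTransitionEdge θ s a then [(s, a)] else []) ++
        transEdgesFrom θ (s * θ (FreeMonoid.of a)) w

/-- The sequence of transition edges of the path starting at `1` reading `u`. -/
noncomputable def transEdges (θ : FreeMonoid A →* WithOne S) (u : FreeMonoid A) :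
    List (WithOne S × A) :=
  transEdgesFrom θ 1 (FreeMonoid.toList u)

/-- The congruence (`τ_r`, together with `(1,1)`) defining the right Karnofsky–Rhodes
expansion: two words of `A^*` represent the same element of `KR_right(S,A)¹` iff they are
both empty or both nonempty, they have the same image in `S¹` and the same sequence of
transition edges. -/
def KRrel (θ : FreeMonoid A →* WithOne S) (u v : FreeMonoid A) : Prop :=
  (u = 1 ∧ v = 1) ∨
    (u ≠ 1 ∧ v ≠ 1 ∧ θ u = θ v ∧ transEdges θ u = transEdges θ v)

/-- Green's quasi-order `≤_J` on `T¹ = KR_right(S,A)¹`, expressed on word representatives: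
`u ≤_J v` iff `u = p v q` holds in `T¹` for some `p, q ∈ T¹`. -/
def leJT (θ : FreeMonoid A →* WithOne S) (u v : FreeMonoid A) : Prop :=
  ∃ p q : FreeMonoid A, KRrel θ u (p * v * q)

/-- `<_J` on `T¹ = KR_right(S,A)¹`, expressed on word representatives. -/
def ltJT (θ : FreeMonoid A →* WithOne S) (u v : FreeMonoid A) : Prop :=
  leJT θ u v ∧ ¬ leJT θ v u

/-- The Dedekind height function on `T¹ = KR_right(S,A)¹`, expressed on word
representatives: the largest `k` such that there is a chain
`t₀ >_J t₁ >_J ⋯ >_J t_k = t` in `T¹`. -/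
noncomputable def heightT (θ : FreeMonoid A →* WithOne S) (u : FreeMonoid A) : ℕ :=
  sSup {k | ∃ c : ℕ → FreeMonoid A, KRrel θ (c k) u ∧ ∀ i < k, ltJT θ (c (i + 1)) (c i)}

/-- `ℓ = 2 · max { h(s) : s ∈ S¹ }`. -/
noncomputable def ell (S : Type*) [Semigroup S] : ℕ :=
  2 * sSup (Set.range fun s : WithOne S => height s)

/-- `ξ(u,v)`: the largest `i` (with `0 ≤ i ≤ m`, `m` the number of transition edges of `u`)
such that the first `i` transition edges of `u` and of `v` agree. -/
noncomputable def xi (θ : FreeMonoid A →* WithOne S) (u v : FreeMonoid A) : ℕ :=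
  sSup {i | i ≤ (transEdges θ u).length ∧
    (transEdges θ u).take i = (transEdges θ v).take i}

/-- The endpoint of an edge `(s, a)` of the right Cayley graph, namely `s·θ(a)`. -/
def edgeEnd (θ : FreeMonoid A →* WithOne S) (e : WithOne S × A) : WithOne S :=
  e.1 * θ (FreeMonoid.of e.2)

/-- The Lyndon–Chiswell length function `D` on `T¹ = KR_right(S,A)¹`, expressed on word
representatives.  With `k = ξ(u,v)` (and indexing the transition edges from `1` as in the
paper, so that `E_k` sits at list index `k-1`):
`D(u,v) = ℓ` if `u = v` in `T¹`; `D(u,v) = 0` if `u ≠ v` in `T¹` and `k = 0`;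
`D(u,v) = 2·h(end(E_k))` if `k > 0`, `E_{k+1}` and `E'_{k+1}` both exist and have the same
endpoint; and `D(u,v) = 2·h(end(E_k)) - 1` in all remaining cases. -/
noncomputable def lcD (θ : FreeMonoid A →* WithOne S) (u v : FreeMonoid A) : ℕ :=
  if KRrel θ u v then ell S
  else if xi θ u v = 0 then 0
  else
    let k := xi θ u v
    let base := (transEdges θ u)[k - 1]?.elim 0 fun e => height (edgeEnd θ e)
    if ∃ e e', (transEdges θ u)[k]? = some e ∧ (transEdges θ v)[k]? = some e' ∧
        edgeEnd θ e = edgeEnd θ e'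
    then 2 * base
    else 2 * base - 1

/-- The relation `∼` on `C = {(k,α) : 0 ≤ k ≤ ℓ, α ∈ T¹}`:
`(k,α) ∼ (k',β)` iff `k = k'` and `D(α,β) ≥ k`. -/
def simRel (θ : FreeMonoid A →* WithOne S)
    (p q : {p : ℕ × FreeMonoid A // p.1 ≤ ell S}) : Prop :=
  p.val.1 = q.val.1 ∧ lcD θ p.val.2 q.val.2 ≥ p.val.1

/-- The vertex set of the Chiswell tree: `∼`-classes `[k,α]`. -/
def CVert (θ : FreeMonoid A →* WithOne S) : Type _ := Quot (simRel θ)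

/-- The edge relation of the Chiswell graph: the edges are `[k,α] — [k+1,α]`
for `0 ≤ k < ℓ` and `α ∈ T¹`. -/
def edgeRel (θ : FreeMonoid A →* WithOne S) (v w : CVert θ) : Prop :=
  ∃ (k : ℕ) (α : FreeMonoid A) (hk : k + 1 ≤ ell S),
    v = Quot.mk (simRel θ) ⟨(k, α), Nat.le_of_succ_le hk⟩ ∧
    w = Quot.mk (simRel θ) ⟨(k + 1, α), hk⟩

/-- The Chiswell graph `𝒞`. -/
def CGraph (θ : FreeMonoid A →* WithOne S) : SimpleGraph (CVert θ) :=
  SimpleGraph.fromRel (edgeRel θ)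

/-- The depth function of the Chiswell tree: `δ([k,α]) = k`. -/
def depth (θ : FreeMonoid A →* WithOne S) : CVert θ → ℕ :=
  Quot.lift (fun p => p.val.1) (fun _ _ h => h.1)

/-- Splitting the transition-edge sequence along a concatenation. -/
lemma transEdgesFrom_append (θ : FreeMonoid A →* WithOne S) (s : WithOne S)
    (w₁ w₂ : List A) :
    transEdgesFrom θ s (w₁ ++ w₂) =
      transEdgesFrom θ s w₁ ++ transEdgesFrom θ (s * θ (FreeMonoid.ofList w₁)) w₂ := by
  induction w₁ generalizing s with
  | nil =>
      show transEdgesFrom θ s w₂ = [] ++ transEdgesFrom θ (s * θ 1) w₂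
      simp
  | cons a w₁ ih =>
      show (if IsTransitionEdge θ s a then [(s, a)] else []) ++
          transEdgesFrom θ (s * θ (FreeMonoid.of a)) (w₁ ++ w₂) = _
      rw [ih]
      have : s * θ (FreeMonoid.ofList (a :: w₁)) =
          s * θ (FreeMonoid.of a) * θ (FreeMonoid.ofList w₁) := by
        have : FreeMonoid.ofList (a :: w₁) = FreeMonoid.of a * FreeMonoid.ofList w₁ := rfl
        rw [this, map_mul, mul_assoc]
      rw [this]
      simp [transEdgesFrom]

/-- A path that lies on a loop of the right Cayley graph contains no transition
edges: if reading `w` from `s` and then `r` returns to `s`, then no edge read along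
`w` is a transition edge. -/
lemma transEdgesFrom_eq_nil_of_loop (θ : FreeMonoid A →* WithOne S) :
    ∀ (w : List A) (r : FreeMonoid A) (s : WithOne S),
      s * θ (FreeMonoid.ofList w) * θ r = s → transEdgesFrom θ s w = [] := by
  intro w
  induction w with
  | nil => intro r s _; rfl
  | cons a w ih =>
      intro r s hs
      have hcons : FreeMonoid.ofList (a :: w) = FreeMonoid.of a * FreeMonoid.ofList w := rfl
      rw [hcons, map_mul] at hs
      have hnt : ¬ IsTransitionEdge θ s a := by
        intro hT
        refine hT ⟨FreeMonoid.ofList w * r, ?_⟩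
        simp only [map_mul, mul_assoc] at hs ⊢
        exact hs
      have hrec : transEdgesFrom θ (s * θ (FreeMonoid.of a)) w = [] := by
        apply ih (r * FreeMonoid.of a)
        have h2 := congrArg (· * θ (FreeMonoid.of a)) hs
        simp only [map_mul, mul_assoc] at h2 ⊢
        exact h2
      show (if IsTransitionEdge θ s a then [(s, a)] else []) ++
          transEdgesFrom θ (s * θ (FreeMonoid.of a)) w = []
      rw [if_neg hnt, hrec]
      rfl

/-- Every element of `S¹` is in the image of `θ` when `θ` hits all of `S`. -/
lemma surj_withOne (θ : FreeMonoid A →* WithOne S)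
    (hgen : ∀ s : S, ∃ u : FreeMonoid A, θ u = (s : WithOne S)) :
    ∀ m : WithOne S, ∃ w : FreeMonoid A, θ w = m := by
  intro m
  by_cases hm : m = 1
  · exact ⟨1, by rw [map_one, hm]⟩
  · obtain ⟨s, rfl⟩ := WithOne.ne_one_iff_exists.mp hm
    exact hgen s

/-- In `S¹` a product can only be `1` if the middle factor is `1`. -/
lemma middle_eq_one {x t y : WithOne S} (h : x * t * y = 1) : t = 1 := by
  by_contra ht
  obtain ⟨t₀, rfl⟩ := WithOne.ne_one_iff_exists.mp ht
  have hxt : ∃ c : S, (x * ↑t₀ : WithOne S) = ↑c := by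
    by_cases hx : x = 1
    · exact ⟨t₀, by rw [hx, one_mul]⟩
    · obtain ⟨x₀, rfl⟩ := WithOne.ne_one_iff_exists.mp hx
      exact ⟨x₀ * t₀, by rw [WithOne.coe_mul]⟩
  obtain ⟨c, hc⟩ := hxt
  rw [hc] at h
  by_cases hy : y = 1
  · rw [hy, mul_one] at h
    exact WithOne.coe_ne_one h
  · obtain ⟨y₀, rfl⟩ := WithOne.ne_one_iff_exists.mp hy
    rw [← WithOne.coe_mul] at h
    exact WithOne.coe_ne_one h

end KRHolonomy

open KRHolonomy in
/-- Let `S` be a finite regular semigroup generated by `A`,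
`T¹ = KR_right(S,A)¹`, and `φ : T¹ → S¹` the canonical surmorphism.  If `t, t' ∈ T¹` satisfy
`φ(t) ≤_J φ(t')`, then `t ≤_J t'`.  On word representatives (`u` for `t`, `v` for `t'`). -/
theorem kr_leJ_of_leJ {A S : Type*} [Finite A] [Semigroup S] [Finite S]
    (θ : FreeMonoid A →* WithOne S)
    (hgen : ∀ s : S, ∃ u : FreeMonoid A, θ u = (s : WithOne S))
    (hproper : ∀ u : FreeMonoid A, θ u = 1 → u = 1)
    (hreg : ∀ s : S, ∃ t : S, s * t * s = s)
    (u v : FreeMonoid A) (h : leJ (θ u) (θ v)) :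
    leJT θ u v := by
  obtain ⟨x, y, hxy⟩ := h
  by_cases hu : u = 1
  · -- then θ v = 1, hence v = 1, and u = 1·v·1 in T¹.
    have hθu : θ u = 1 := by rw [hu, map_one]
    have hθv : θ v = 1 := middle_eq_one (x := x) (y := y) (by rw [← hxy, hθu])
    have hv : v = 1 := hproper v hθv
    exact ⟨1, 1, Or.inl ⟨hu, by simp [hv]⟩⟩
  · -- main case: θ u ∈ S; use regularity.
    have hθu : θ u ≠ 1 := fun hh => hu (hproper u hh)
    obtain ⟨s₀, hs₀⟩ := WithOne.ne_one_iff_exists.mp hθu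
    obtain ⟨t, ht⟩ := hreg s₀
    obtain ⟨z, hz⟩ := surj_withOne θ hgen ((t : WithOne S) * x)
    obtain ⟨q, hq⟩ := surj_withOne θ hgen y
    -- the key loop identity: θ u · θ z · θ v · θ q = θ u
    have hloop : θ u * (θ z * θ v * θ q) = θ u := by
      have key : θ u * ↑t * θ u = θ u := by
        rw [← hs₀, ← WithOne.coe_mul, ← WithOne.coe_mul, ht]
      calc θ u * (θ z * θ v * θ q)
          = θ u * ↑t * (x * θ v * y) := by
            rw [hz, hq]; simp only [mul_assoc]
        _ = θ u * ↑t * θ u := by rw [← hxy]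
        _ = θ u := key
    refine ⟨u * z, q, Or.inr ⟨hu, ?_, ?_, ?_⟩⟩
    · -- u * z * v * q ≠ 1 since u ≠ 1
      intro hcon
      apply hu
      have : FreeMonoid.toList (u * z * v * q) = ([] : List A) := by
        rw [hcon]; rfl
      have h3 := List.append_eq_nil_iff.mp
        (List.append_eq_nil_iff.mp (List.append_eq_nil_iff.mp this).1).1
      exact congrArg FreeMonoid.ofList h3.1
    · -- same image in S¹
      rw [map_mul, map_mul, map_mul, mul_assoc, mul_assoc, ← mul_assoc (θ z)]
      exact hloop.symm
    · -- same sequence of transition edges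
      unfold transEdges
      have hsplit : FreeMonoid.toList (u * z * v * q) =
          FreeMonoid.toList u ++ FreeMonoid.toList (z * v * q) := by
        show FreeMonoid.toList u ++ FreeMonoid.toList z ++ FreeMonoid.toList v ++
            FreeMonoid.toList q = FreeMonoid.toList u ++
            (FreeMonoid.toList z ++ FreeMonoid.toList v ++ FreeMonoid.toList q)
        simp [List.append_assoc]
      rw [hsplit, transEdgesFrom_append]
      have h1 : (1 : WithOne S) * θ (FreeMonoid.ofList (FreeMonoid.toList u)) = θ u := by
        rw [one_mul]; rfl
      rw [h1]
      have hnil : transEdgesFrom θ (θ u) (FreeMonoid.toList (z * v * q)) = [] := by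
        apply transEdgesFrom_eq_nil_of_loop θ _ 1
        rw [map_one, mul_one]
        have : FreeMonoid.ofList (FreeMonoid.toList (z * v * q)) = z * v * q := rfl
        rw [this, map_mul, map_mul]
        exact hloop
      rw [hnil, List.append_nil]
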